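/- arXiv:2306.00125 — 6 statements merged into one kernel-verified Lean document; each statement's English description precedes it below -/
import Mathlib

section
/- Let G be a graph, k ≥ 1, and F a field containing a primitive k-th root of unity w. The system consisting of y_v^k = 1 for each vertex v and ∑_{j=0}^{k-1} y_u^j · y_v^{k-1-j} = 0 for each edge (u,v) has a common solution in F if and only if G has a proper k-colouring. -/
/-!
The map `i ↦ w ^ i` identifies `Fin k` with the `k`-th roots of unity, so solutions of the
equations `y_v ^ k = 1` are exactly colourings by `k` colours. For `k`-th roots of unity `x, y`
the edge polynomial `∑ x^j y^(k-1-j)` times `x - y` is `x^k - y^k = 0`, so it vanishes when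
`x ≠ y`, while for `x = y` it equals `k x^(k-1)`, which is nonzero because a field containing a
primitive `k`-th root of unity has characteristic prime to `k`. Thus the edge equations say
precisely that the colouring is proper.
-/

open Finset

theorem geom_sum₂_eq_zero_iff_ne {R : Type*} [CommRing R] [IsDomain R] {x y : R} {n : ℕ}
    (hn : (n : R) ≠ 0) (hx : x ≠ 0) (hxy : x ^ n = y ^ n) :
    ∑ i ∈ range n, x ^ i * y ^ (n - 1 - i) = 0 ↔ x ≠ y := by
  constructor
  · rintro h rfl
    rw [geom_sum₂_self] at h
    exact mul_ne_zero hn (pow_ne_zero _ hx) h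
  · intro hne
    have h := geom_sum₂_mul x y n
    rw [hxy, sub_self] at h
    exact (mul_eq_zero.1 h).resolve_right (sub_ne_zero.2 hne)

namespace IsPrimitiveRoot

theorem injective_fin_pow {M : Type*} [CommMonoid M] {ζ : M} {k : ℕ} (h : IsPrimitiveRoot ζ k) :
    Function.Injective fun i : Fin k => ζ ^ (i : ℕ) :=
  fun i j hij => Fin.ext (h.pow_inj i.isLt j.isLt hij)

theorem range_fin_pow {R : Type*} [CommRing R] [IsDomain R] {ζ : R} {k : ℕ} [NeZero k]
    (h : IsPrimitiveRoot ζ k) :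
    Set.range (fun i : Fin k => ζ ^ (i : ℕ)) = {x | x ^ k = 1} := by
  ext x
  constructor
  · rintro ⟨i, rfl⟩
    change (ζ ^ (i : ℕ)) ^ k = 1
    rw [pow_right_comm, h.pow_eq_one, one_pow]
  · intro hx
    obtain ⟨i, hi, rfl⟩ := h.eq_pow_of_pow_eq_one hx
    exact ⟨⟨i, hi⟩, rfl⟩

end IsPrimitiveRoot

theorem SimpleGraph.exists_proper_mem_range_iff {V α β : Type*} (G : SimpleGraph V)
    {e : α → β} (he : Function.Injective e) :
    (∃ y : V → β, (∀ v, y v ∈ Set.range e) ∧ ∀ u v, G.Adj u v → y u ≠ y v) ↔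
      ∃ χ : V → α, ∀ u v, G.Adj u v → χ u ≠ χ v := by
  constructor
  · rintro ⟨y, hy, hproper⟩
    choose χ hχ using hy
    exact ⟨χ, fun u v huv hχuv => hproper u v huv (by rw [← hχ u, ← hχ v, hχuv])⟩
  · rintro ⟨χ, hproper⟩
    exact ⟨e ∘ χ, fun v => ⟨χ v, rfl⟩, fun u v huv => he.ne (hproper u v huv)⟩

theorem stmt_2_general {V : Type} (F : Type) [Field F] (G : SimpleGraph V) (k : ℕ)
    (hk : 1 ≤ k) (w : F) (hw1 : w ^ k = 1)
    (hwprim : ∀ j : ℕ, 0 < j → j < k → w ^ j ≠ 1) :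
    (∃ y : V → F,
      (∀ v, y v ^ k = 1) ∧
      (∀ u v, G.Adj u v →
        ∑ j ∈ Finset.range k, (y u) ^ j * (y v) ^ (k - 1 - j) = 0)) ↔
    ∃ χ : V → Fin k, ∀ u v, G.Adj u v → χ u ≠ χ v := by
  have hprim : IsPrimitiveRoot w k := (IsPrimitiveRoot.iff hk).2 ⟨hw1, hwprim⟩
  have : NeZero k := ⟨by omega⟩
  have hchar : (k : F) ≠ 0 := hprim.neZero'.out
  rw [← G.exists_proper_mem_range_iff hprim.injective_fin_pow, hprim.range_fin_pow]
  refine exists_congr fun y => and_congr_right fun hy => forall₂_congr fun u v => ?_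
  have hyu : y u ≠ 0 := ne_zero_pow (NeZero.ne k) ((hy u).symm ▸ one_ne_zero)
  rw [geom_sum₂_eq_zero_iff_ne hchar hyu ((hy u).trans (hy v).symm)]

theorem stmt_2 {V : Type} (F : Type) [Field F] (G : SimpleGraph V) (k : ℕ)
    (hk : 1 ≤ k) (hchar : (k : F) ≠ 0) (w : F) (hw1 : w ^ k = 1)
    (hwprim : ∀ j : ℕ, 0 < j → j < k → w ^ j ≠ 1) :
    (∃ y : V → F,
      (∀ v, y v ^ k = 1) ∧
      (∀ u v, G.Adj u v →
        ∑ j ∈ Finset.range k, (y u) ^ j * (y v) ^ (k - 1 - j) = 0)) ↔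
    ∃ χ : V → Fin k, ∀ u v, G.Adj u v → χ u ≠ χ v :=
  stmt_2_general F G k hk w hw1 hwprim
end

section
/- Let w be a primitive k-th root of unity in a field F. Suppose (x_{u,j})_{j=1}^k and (x_{v,j})_{j=1}^k are elements of F satisfying the 0/1 constraints x^2 = x, orthogonality x_{u,j}x_{u,j'} = 0 for j ≠ j' (likewise for v), sum-to-one constraints ∑_j x_{u,j} = 1 and ∑_j x_{v,j} = 1, and the edge constraints x_{u,j}·x_{v,j} = 0 for all j. Setting Y_u = ∑_j x_{u,j} w^j and Y_v = ∑_j x_{v,j} w^j, it holds that ∑_{j=0}^{k-1} Y_u^j · Y_v^{k-1-j} = 0. -/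
/-! In a field the only idempotents are `0` and `1`, so each family `x_u`, `x_v` is the
indicator of a single colour, `a` and `b` say, and the edge constraint forces `a ≠ b`. Hence
`Y_u = w^(a+1)` and `Y_v = w^(b+1)` are distinct `k`-th roots of unity, and the sum is the
geometric sum `(Y_u^k - Y_v^k) / (Y_u - Y_v) = 0`. -/

open Finset

lemma CompleteOrthogonalIdempotents.exists_eq_single {R I : Type*} [Semiring R]
    [IsLeftCancelMulZero R] [Nontrivial R] [Fintype I] [DecidableEq I] {e : I → R}
    (he : CompleteOrthogonalIdempotents e) : ∃ a, e = Pi.single a 1 := by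
  obtain ⟨a, -, hea⟩ := exists_ne_zero_of_sum_ne_zero (he.complete ▸ one_ne_zero : ∑ i, e i ≠ 0)
  have hea : e a = 1 := (IsIdempotentElem.iff_eq_zero_or_one.mp (he.idem a)).resolve_left hea
  refine ⟨a, funext fun i => ?_⟩
  rcases eq_or_ne i a with rfl | hia
  · simp [hea]
  · simpa [hia, hea] using he.ortho hia

lemma geom_sum₂_eq_zero_of_pow_eq_pow {K : Type*} [Field K] {x y : K} {n : ℕ} (hxy : x ≠ y)
    (hn : x ^ n = y ^ n) : ∑ i ∈ range n, x ^ i * y ^ (n - 1 - i) = 0 := by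
  rw [geom₂_sum hxy, hn, sub_self, zero_div]

lemma IsPrimitiveRoot.injective_pow_succ {M : Type*} [CommMonoidWithZero M]
    [IsLeftCancelMulZero M] [Nontrivial M] {ζ : M} {k : ℕ} (h : IsPrimitiveRoot ζ k) :
    Function.Injective fun i : Fin k => ζ ^ ((i : ℕ) + 1) := by
  intro i j hij
  have hk : k ≠ 0 := i.pos.ne'
  simp only [pow_succ'] at hij
  exact Fin.ext (h.pow_inj i.2 j.2 (mul_left_cancel₀ (h.ne_zero hk) hij))

theorem stmt_5 {F : Type} [Field F] (k : ℕ) (hk : 1 ≤ k) (w : F)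
    (hw1 : w ^ k = 1) (hwprim : ∀ j : ℕ, 0 < j → j < k → w ^ j ≠ 1)
    (xu xv : Fin k → F)
    (hui : ∀ j, xu j ^ 2 = xu j) (hvi : ∀ j, xv j ^ 2 = xv j)
    (huo : ∀ j j', j ≠ j' → xu j * xu j' = 0)
    (hvo : ∀ j j', j ≠ j' → xv j * xv j' = 0)
    (hus : ∑ j, xu j = 1) (hvs : ∑ j, xv j = 1)
    (hedge : ∀ j, xu j * xv j = 0) :
    ∑ j ∈ Finset.range k,
      (∑ i : Fin k, xu i * w ^ ((i : ℕ) + 1)) ^ j *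
      (∑ i : Fin k, xv i * w ^ ((i : ℕ) + 1)) ^ (k - 1 - j) = 0 := by
  have hw : IsPrimitiveRoot w k := .mk_of_lt w hk hw1 hwprim
  obtain ⟨a, rfl⟩ := CompleteOrthogonalIdempotents.exists_eq_single
    ⟨⟨fun j => (sq _).symm.trans (hui j), huo⟩, hus⟩
  obtain ⟨b, rfl⟩ := CompleteOrthogonalIdempotents.exists_eq_single
    ⟨⟨fun j => (sq _).symm.trans (hvi j), hvo⟩, hvs⟩
  have hab : a ≠ b := by
    rintro rfl
    simpa using hedge a
  simp only [Pi.single_apply, ite_mul, one_mul, zero_mul, sum_ite_eq', mem_univ, if_true]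
  refine geom_sum₂_eq_zero_of_pow_eq_pow (hw.injective_pow_succ.ne hab) ?_
  rw [pow_right_comm, hw1, one_pow, pow_right_comm, hw1, one_pow]
end

section
/- The gadget graph D(i,i',c,c) (the same-colour injectivity gadget) consisting of two disjoint k-cliques L = {l_1,…,l_k} and R = {r_1,…,r_k}, pigeon vertices i connected to l_1 and i' connected to r_1, a vertex w precoloured c connected to l_2,…,l_{k-1}, a vertex w' precoloured c connected to r_2,…,r_{k-1}, and an edge between l_k and r_k, has the property: a proper k-colouring of the gadget extending the precolouring and assigning colours b to i and b' to i' exists if and only if (b,b') ≠ (c,c). -/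
/-- Vertices of the same-colour injectivity gadget `D(i,i',c,c)`:
two pigeon vertices, a left `k`-clique, a right `k`-clique, and two
precoloured vertices `w`, `w'`. -/
def GadgetV (k : ℕ) : Type := Fin 2 ⊕ Fin k ⊕ Fin k ⊕ Fin 2

/-- Pigeon vertices `i` (for `t = 0`) and `i'` (for `t = 1`). -/
def Pg (k : ℕ) (t : Fin 2) : GadgetV k := Sum.inl t

/-- Left-clique vertex `l_{a+1}`. -/
def Lg (k : ℕ) (a : Fin k) : GadgetV k := Sum.inr (Sum.inl a)

/-- Right-clique vertex `r_{a+1}`. -/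
def Rg (k : ℕ) (a : Fin k) : GadgetV k := Sum.inr (Sum.inr (Sum.inl a))

/-- Precoloured vertices `w` (for `t = 0`) and `w'` (for `t = 1`). -/
def Wg (k : ℕ) (t : Fin 2) : GadgetV k := Sum.inr (Sum.inr (Sum.inr t))

/-- The same-colour gadget graph `D(i,i',c,c)`: two disjoint `k`-cliques,
pigeon `i` joined to `l_1`, pigeon `i'` joined to `r_1`, vertex `w` joined to
`l_2,…,l_{k-1}`, vertex `w'` joined to `r_2,…,r_{k-1}`, and an edge between
`l_k` and `r_k`. -/
def gadgetSame (k : ℕ) : SimpleGraph (GadgetV k) :=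
  SimpleGraph.fromRel (fun x y =>
    (∃ a b : Fin k, a ≠ b ∧ x = Lg k a ∧ y = Lg k b) ∨
    (∃ a b : Fin k, a ≠ b ∧ x = Rg k a ∧ y = Rg k b) ∨
    (∃ a : Fin k, (a : ℕ) = 0 ∧ x = Pg k 0 ∧ y = Lg k a) ∨
    (∃ a : Fin k, (a : ℕ) = 0 ∧ x = Pg k 1 ∧ y = Rg k a) ∨
    (∃ a : Fin k, 1 ≤ (a : ℕ) ∧ (a : ℕ) ≤ k - 2 ∧ x = Wg k 0 ∧ y = Lg k a) ∨
    (∃ a : Fin k, 1 ≤ (a : ℕ) ∧ (a : ℕ) ≤ k - 2 ∧ x = Wg k 1 ∧ y = Rg k a) ∨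
    (∃ a b : Fin k, (a : ℕ) = k - 1 ∧ (b : ℕ) = k - 1 ∧ x = Lg k a ∧ y = Rg k b))

/-!
The colour `c` occurs on each clique. If `i` and `w` are both coloured `c`, then on the left clique
`c` can sit neither at `l_1` nor at `l_2, …, l_{k-1}`, so it sits at `l_k`; likewise on the right,
so `b = b' = c` forces the adjacent `l_k` and `r_k` to share colour `c`. Conversely, if `b ≠ c`,
give `l_1` and `r_k` the colour `c` and `r_1` a colour other than `b'` and `c`, which exists as
`k ≥ 3`; the case `b' ≠ c` follows by the left–right symmetry of the gadget.
-/

theorem surjective_comp_of_pairwise_adj {V α : Type*} [Finite α] {G : SimpleGraph V}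
    {χ : V → α} (hχ : ∀ u v, G.Adj u v → χ u ≠ χ v) {f : α → V}
    (hf : Pairwise fun a b => G.Adj (f a) (f b)) : Function.Surjective (χ ∘ f) :=
  Finite.injective_iff_surjective.mp fun _ _ hab =>
    of_not_not fun hne => hχ _ _ (hf hne) hab

theorem exists_perm_apply_eq_apply_eq {α : Type*} {a a' x x' : α} (ha : a ≠ a')
    (hx : x ≠ x') : ∃ σ : Equiv.Perm α, σ a = x ∧ σ a' = x' := by
  obtain ⟨σ, hσ⟩ := Equiv.Perm.exists_extending_pair ![a, a'] ![x, x']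
    (by simpa [Function.Injective, Fin.forall_fin_two] using ⟨ha, ha.symm⟩)
    (by simpa [Function.Injective, Fin.forall_fin_two] using ⟨hx, hx.symm⟩)
  exact ⟨σ, hσ 0, hσ 1⟩

theorem exists_ne_ne_of_two_lt_card {α : Type*} [Fintype α] [DecidableEq α]
    (h : 2 < Fintype.card α) (x y : α) : ∃ d, d ≠ x ∧ d ≠ y := by
  obtain ⟨d, -, hd⟩ := Finset.exists_mem_notMem_of_card_lt_card
    (s := {x, y}) (t := Finset.univ) (Finset.card_le_two.trans_lt h)
  exact ⟨d, by simpa [not_or] using hd⟩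

def IsGadgetColouring (k : ℕ) (c b b' : Fin k) (χ : GadgetV k → Fin k) : Prop :=
  (∀ u v, (gadgetSame k).Adj u v → χ u ≠ χ v) ∧
    χ (Wg k 0) = c ∧ χ (Wg k 1) = c ∧ χ (Pg k 0) = b ∧ χ (Pg k 1) = b'

section Adjacency

variable {k : ℕ}

-- Unfolding `GadgetV` lets `simp` see the `Sum` constructors and use their injectivity.
theorem gadgetSame_adj_Lg_Lg {a a' : Fin k} (h : a ≠ a') :
    (gadgetSame k).Adj (Lg k a) (Lg k a') := by
  simp [gadgetSame, Lg, GadgetV, h]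

theorem gadgetSame_adj_Pg_Lg {a : Fin k} (h : (a : ℕ) = 0) :
    (gadgetSame k).Adj (Pg k 0) (Lg k a) := by
  simp [gadgetSame, Pg, Lg, GadgetV, h]

theorem gadgetSame_adj_Wg_Lg {a : Fin k} (h₁ : 1 ≤ (a : ℕ)) (h₂ : (a : ℕ) ≤ k - 2) :
    (gadgetSame k).Adj (Wg k 0) (Lg k a) := by
  simp [gadgetSame, Wg, Lg, GadgetV, h₁, h₂]

theorem gadgetSame_adj_Lg_Rg {a a' : Fin k} (h : (a : ℕ) = k - 1) (h' : (a' : ℕ) = k - 1) :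
    (gadgetSame k).Adj (Lg k a) (Rg k a') := by
  simp [gadgetSame, Lg, Rg, GadgetV, h, h']

end Adjacency

def gadgetFlip (k : ℕ) : GadgetV k → GadgetV k
  | .inl t => .inl t.rev
  | .inr (.inl a) => .inr (.inr (.inl a))
  | .inr (.inr (.inl a)) => .inr (.inl a)
  | .inr (.inr (.inr t)) => .inr (.inr (.inr t.rev))

theorem gadgetSame_adj_gadgetFlip {k : ℕ} {u v : GadgetV k} (h : (gadgetSame k).Adj u v) :
    (gadgetSame k).Adj (gadgetFlip k u) (gadgetFlip k v) := by
  simp only [gadgetSame, SimpleGraph.fromRel_adj] at h ⊢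
  obtain ⟨-, h | h⟩ := h <;>
    rcases h with ⟨a, a', h, rfl, rfl⟩ | ⟨a, a', h, rfl, rfl⟩ | ⟨a, h, rfl, rfl⟩ |
      ⟨a, h, rfl, rfl⟩ | ⟨a, h, h', rfl, rfl⟩ | ⟨a, h, h', rfl, rfl⟩ | ⟨a, a', h, h', rfl, rfl⟩ <;>
    simp [gadgetFlip, Pg, Lg, Rg, Wg, GadgetV, *, ne_comm]

theorem IsGadgetColouring.comp_gadgetFlip {k : ℕ} {c b b' : Fin k} {χ : GadgetV k → Fin k}
    (hχ : IsGadgetColouring k c b b' χ) : IsGadgetColouring k c b' b (χ ∘ gadgetFlip k) := by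
  obtain ⟨hproper, hw, hw', hp, hp'⟩ := hχ
  exact ⟨fun u v huv => hproper _ _ (gadgetSame_adj_gadgetFlip huv), hw', hw, hp', hp⟩

theorem IsGadgetColouring.val_eq_of_apply_Lg_eq {k : ℕ} {c b' : Fin k} {χ : GadgetV k → Fin k}
    (hχ : IsGadgetColouring k c c b' χ) {a : Fin k} (ha : χ (Lg k a) = c) : (a : ℕ) = k - 1 := by
  obtain ⟨hproper, hw, -, hp, -⟩ := hχ
  by_contra hne
  rcases Nat.eq_zero_or_pos a with h0 | hpos
  · exact hproper _ _ (gadgetSame_adj_Pg_Lg h0) (hp.trans ha.symm)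
  · exact hproper _ _ (gadgetSame_adj_Wg_Lg hpos (by omega)) (hw.trans ha.symm)

theorem not_isGadgetColouring_same {k : ℕ} (c : Fin k) (χ : GadgetV k → Fin k) :
    ¬IsGadgetColouring k c c c χ := by
  intro hχ
  have hflip := hχ.comp_gadgetFlip
  obtain ⟨a, ha⟩ := surjective_comp_of_pairwise_adj hχ.1
    (fun _ _ h => gadgetSame_adj_Lg_Lg h) c
  obtain ⟨a', ha'⟩ := surjective_comp_of_pairwise_adj hflip.1
    (fun _ _ h => gadgetSame_adj_Lg_Lg h) c
  exact hχ.1 _ _ (gadgetSame_adj_Lg_Rg (hχ.val_eq_of_apply_Lg_eq ha)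
    (hflip.val_eq_of_apply_Lg_eq ha')) (ha.trans ha'.symm)

def gadgetColouring {k : ℕ} (b b' c : Fin k) (f g : Fin k → Fin k) : GadgetV k → Fin k :=
  Sum.elim ![b, b'] (Sum.elim f (Sum.elim g fun _ => c))

theorem gadgetColouring_proper {k : ℕ} {b b' c : Fin k} {f g : Fin k → Fin k}
    (hf : Function.Injective f) (hg : Function.Injective g)
    (hfb : ∀ a : Fin k, (a : ℕ) = 0 → f a ≠ b)
    (hgb : ∀ a : Fin k, (a : ℕ) = 0 → g a ≠ b')
    (hfc : ∀ a : Fin k, 1 ≤ (a : ℕ) → (a : ℕ) ≤ k - 2 → f a ≠ c)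
    (hgc : ∀ a : Fin k, 1 ≤ (a : ℕ) → (a : ℕ) ≤ k - 2 → g a ≠ c)
    (hfg : ∀ a a' : Fin k, (a : ℕ) = k - 1 → (a' : ℕ) = k - 1 → f a ≠ g a') (u v : GadgetV k)
    (huv : (gadgetSame k).Adj u v) :
    gadgetColouring b b' c f g u ≠ gadgetColouring b b' c f g v := by
  simp only [gadgetSame, SimpleGraph.fromRel_adj] at huv
  obtain ⟨-, h | h⟩ := huv
  on_goal 2 => apply Ne.symm
  all_goals
    rcases h with ⟨a, a', h, rfl, rfl⟩ | ⟨a, a', h, rfl, rfl⟩ | ⟨a, h, rfl, rfl⟩ |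
      ⟨a, h, rfl, rfl⟩ | ⟨a, h, h', rfl, rfl⟩ | ⟨a, h, h', rfl, rfl⟩ | ⟨a, a', h, h', rfl, rfl⟩
    all_goals
      simp only [gadgetColouring, Pg, Lg, Rg, Wg, Sum.elim_inl, Sum.elim_inr,
        Matrix.cons_val_zero, Matrix.cons_val_one]
      first
      | exact hf.ne h
      | exact hg.ne h
      | exact (hfb a h).symm
      | exact (hgb a h).symm
      | exact (hfc a h h').symm
      | exact (hgc a h h').symm
      | exact hfg a a' h h'

theorem exists_isGadgetColouring_of_ne {k : ℕ} (hk : 3 ≤ k) {c b : Fin k} (hb : b ≠ c)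
    (b' : Fin k) : ∃ χ, IsGadgetColouring k c b b' χ := by
  let z : Fin k := ⟨0, by omega⟩
  let m : Fin k := ⟨k - 1, by omega⟩
  have hzm : z ≠ m := by simp [z, m, Fin.ext_iff]; omega
  obtain ⟨d, hdb', hdc⟩ := exists_ne_ne_of_two_lt_card (by simp; omega) b' c
  obtain ⟨τ, hτz, hτm⟩ := exists_perm_apply_eq_apply_eq hzm hdc
  let σ := Equiv.swap z c
  have hσ : ∀ a, σ a = c ↔ (a : ℕ) = 0 := fun a => by
    simp [σ, Equiv.swap_apply_eq_iff, Fin.ext_iff, z]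
  have hτ : ∀ a, τ a = c ↔ (a : ℕ) = k - 1 := fun a => by
    rw [← hτm, τ.injective.eq_iff, Fin.ext_iff]
  refine ⟨gadgetColouring b b' c σ τ, gadgetColouring_proper σ.injective τ.injective
    ?_ ?_ ?_ ?_ ?_, rfl, rfl, rfl, rfl⟩
  · intro a ha
    rw [(hσ a).2 ha]
    exact hb.symm
  · intro a ha
    rwa [show a = z from Fin.ext ha, hτz]
  · intro a h _ hσa
    have := (hσ a).1 hσa
    omega
  · intro a _ h hτa
    have := (hτ a).1 hτa
    omega
  · intro a a' ha ha' hστ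
    have := (hσ a).1 (hστ.trans ((hτ a').2 ha'))
    omega

theorem stmt_6 (k : ℕ) (hk : 3 ≤ k) (c b b' : Fin k) :
    (∃ χ : GadgetV k → Fin k,
      (∀ u v, (gadgetSame k).Adj u v → χ u ≠ χ v) ∧
      χ (Wg k 0) = c ∧ χ (Wg k 1) = c ∧
      χ (Pg k 0) = b ∧ χ (Pg k 1) = b') ↔
    (b, b') ≠ (c, c) := by
  constructor
  · rintro ⟨χ, hχ⟩ hbb'
    obtain ⟨rfl, rfl⟩ := Prod.mk.inj hbb'
    exact not_isGadgetColouring_same _ χ hχ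
  · intro h
    obtain hb | hb' : b ≠ c ∨ b' ≠ c := by
      rwa [Ne, Prod.mk.injEq, not_and_or] at h
    · exact exists_isGadgetColouring_of_ne hk hb b'
    · obtain ⟨χ, hχ⟩ := exists_isGadgetColouring_of_ne hk hb' b
      exact ⟨_, hχ.comp_gadgetFlip⟩
end

section
/- Let B be a left-regular bipartite graph with left degree k, left side I and right side J, and let G(B) be the graph built from B by: fixing for each pigeon i an enumeration of its k edges; adding for each pair of distinct pigeons i ≠ i' and pair of edge-indices (c, c') leading to a common hole an injectivity gadget D(i,i',c,c'); and replacing precoloured vertices with vertices of a pre-colouring gadget (a path power graph where every k consecutive vertices form a clique). Then G(B) is k-colourable if and only if there is an injective mapping of I into J respecting the edges of B. -/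
section ColouringReduction

variable {I J : Type} [Fintype I] [DecidableEq I] [DecidableEq J]

/-- Collisions of a left-regular bipartite graph with left side `I` (pigeons),
right side `J` (holes) and edge enumeration `e : I → Fin k → J` (the `c`-th
edge of pigeon `i` leads to hole `e i c`): quadruples `(i, i', c, c')` with
`i ≠ i'` such that the `c`-th edge of `i` and the `c'`-th edge of `i'` lead
to a common hole. -/
def Coll (k : ℕ) (e : I → Fin k → J) : Type :=
  {q : (I × I) × Fin k × Fin k // q.1.1 ≠ q.1.2 ∧ e q.1.1 q.2.1 = e q.1.2 q.2.2}

instance (k : ℕ) (e : I → Fin k → J) : Fintype (Coll k e) := by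
  unfold Coll; infer_instance

/-- Internal vertices of the injectivity gadget `D(i,i',c,c')` attached to a
collision `q`: a left `k`-clique (flag `false`) and a right `k`-clique (flag
`true`).  When `c ≠ c'` the two cliques share the vertex `l_k = r_k`, so in
that case the right-clique slot of index `k-1` is excluded (it is represented
by the left vertex of index `k-1`). -/
def GadV (k : ℕ) (e : I → Fin k → J) : Type :=
  Σ q : Coll k e,
    {x : Bool × Fin k // ¬ (x.1 = true ∧ (x.2 : ℕ) = k - 1 ∧ q.1.2.1 ≠ q.1.2.2)}

/-- The left-clique vertex `l_{a+1}` of the gadget of collision `q`. -/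
def Lv {k : ℕ} {e : I → Fin k → J} (q : Coll k e) (a : Fin k) : GadV k e :=
  ⟨q, ⟨(false, a), by simp⟩⟩

/-- The right-clique vertex `r_{a+1}` of the gadget of collision `q`; when
`c ≠ c'` the last right vertex `r_k` is identified with `l_k`. -/
def Rv {k : ℕ} {e : I → Fin k → J} (q : Coll k e) (a : Fin k) : GadV k e :=
  if h : (a : ℕ) = k - 1 ∧ q.1.2.1 ≠ q.1.2.2 then
    ⟨q, ⟨(false, a), by simp⟩⟩
  else
    ⟨q, ⟨(true, a), fun hcon => h ⟨hcon.2.1, hcon.2.2⟩⟩⟩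

/-- The number of vertices of the pre-colouring gadget: enough room to give
each collision gadget its two (formerly precoloured) vertices. -/
def Mtotal (k : ℕ) (e : I → Fin k → J) : ℕ :=
  2 * Fintype.card (Coll k e) * k + k

/-- A fixed enumeration of the collisions. -/
noncomputable def collIdx {k : ℕ} {e : I → Fin k → J} (q : Coll k e) : ℕ :=
  (Fintype.equivFin (Coll k e) q : ℕ)

/-- The position in the pre-colouring gadget of the vertex `w` of the gadget
of collision `q = (i,i',c,c')` (formerly precoloured `c`); its position is
congruent to `c` modulo `k`. -/
noncomputable def wpos {k : ℕ} {e : I → Fin k → J} (q : Coll k e) : Fin (Mtotal k e) :=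
  ⟨2 * collIdx q * k + (q.1.2.1 : ℕ), by
    have h1 : collIdx q + 1 ≤ Fintype.card (Coll k e) :=
      Nat.succ_le_of_lt (Fintype.equivFin (Coll k e) q).isLt
    have h2 : (q.1.2.1 : ℕ) < k := q.1.2.1.isLt
    have h3 : (2 * collIdx q + 2) * k ≤ 2 * Fintype.card (Coll k e) * k :=
      Nat.mul_le_mul_right k (by omega)
    unfold Mtotal
    nlinarith⟩

/-- The position in the pre-colouring gadget of the vertex `w'` of the gadget
of collision `q = (i,i',c,c')` (formerly precoloured `c'`); its position is
congruent to `c'` modulo `k`. -/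
noncomputable def wpos' {k : ℕ} {e : I → Fin k → J} (q : Coll k e) : Fin (Mtotal k e) :=
  ⟨(2 * collIdx q + 1) * k + (q.1.2.2 : ℕ), by
    have h1 : collIdx q + 1 ≤ Fintype.card (Coll k e) :=
      Nat.succ_le_of_lt (Fintype.equivFin (Coll k e) q).isLt
    have h2 : (q.1.2.2 : ℕ) < k := q.1.2.2.isLt
    have h3 : (2 * collIdx q + 2) * k ≤ 2 * Fintype.card (Coll k e) * k :=
      Nat.mul_le_mul_right k (by omega)
    unfold Mtotal
    nlinarith⟩

/-- Vertices of the graph `G(B)`: the pigeon vertices, the internal gadget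
vertices, and the vertices `u_1,…,u_M` of the pre-colouring gadget. -/
def ColV (k : ℕ) (e : I → Fin k → J) : Type :=
  I ⊕ GadV k e ⊕ Fin (Mtotal k e)

/-- A pigeon vertex of `G(B)`. -/
def pigV {k : ℕ} {e : I → Fin k → J} (i : I) : ColV k e := Sum.inl i

/-- An internal gadget vertex of `G(B)`. -/
def gadV {k : ℕ} {e : I → Fin k → J} (x : GadV k e) : ColV k e :=
  Sum.inr (Sum.inl x)

/-- A pre-colouring gadget vertex of `G(B)`. -/
def preV {k : ℕ} {e : I → Fin k → J} (t : Fin (Mtotal k e)) : ColV k e :=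
  Sum.inr (Sum.inr t)

/-- The graph `G(B)` built from the left-regular bipartite graph `B` given by
`e : I → Fin k → J`: for every collision `(i,i',c,c')` an injectivity gadget
`D(i,i',c,c')` consisting of two `k`-cliques (joined by an `l_k`–`r_k` edge
when `c = c'`, and sharing the vertex `l_k = r_k` when `c ≠ c'`), with pigeon
`i` joined to `l_1`, pigeon `i'` joined to `r_1`, a vertex joined to
`l_2,…,l_{k-1}` and a vertex joined to `r_2,…,r_{k-1}`; these latter
(formerly precoloured) vertices are the vertices `u_t` of the pre-colouring
gadget, in which `u_s ∼ u_t` iff `0 < |s - t| < k`, the vertex formerly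
precoloured `c` being a fresh `u_t` with `t ≡ c (mod k)`. -/
def colourGraph (k : ℕ) (e : I → Fin k → J) : SimpleGraph (ColV k e) :=
  SimpleGraph.fromRel (fun x y =>
    (∃ s t : Fin (Mtotal k e), (s : ℕ) < (t : ℕ) ∧ (t : ℕ) < (s : ℕ) + k ∧
      x = preV s ∧ y = preV t) ∨
    (∃ (q : Coll k e) (a b : Fin k), a ≠ b ∧
      x = gadV (Lv q a) ∧ y = gadV (Lv q b)) ∨
    (∃ (q : Coll k e) (a b : Fin k), a ≠ b ∧
      x = gadV (Rv q a) ∧ y = gadV (Rv q b)) ∨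
    (∃ (q : Coll k e) (a : Fin k), q.1.2.1 = q.1.2.2 ∧ (a : ℕ) = k - 1 ∧
      x = gadV (Lv q a) ∧ y = gadV (Rv q a)) ∨
    (∃ (q : Coll k e) (a : Fin k), (a : ℕ) = 0 ∧
      x = pigV q.1.1.1 ∧ y = gadV (Lv q a)) ∨
    (∃ (q : Coll k e) (a : Fin k), (a : ℕ) = 0 ∧
      x = pigV q.1.1.2 ∧ y = gadV (Rv q a)) ∨
    (∃ (q : Coll k e) (a : Fin k), 1 ≤ (a : ℕ) ∧ (a : ℕ) ≤ k - 2 ∧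
      x = preV (wpos q) ∧ y = gadV (Lv q a)) ∨
    (∃ (q : Coll k e) (a : Fin k), 1 ≤ (a : ℕ) ∧ (a : ℕ) ≤ k - 2 ∧
      x = preV (wpos' q) ∧ y = gadV (Rv q a)))

/-!
Every `k` consecutive vertices of the pre-colouring gadget form a clique, so a proper
`k`-colouring of it is `k`-periodic and restricts to a bijection `σ` of `Fin k` on
`u_1, …, u_k`: the vertex formerly precoloured `c` gets the colour `σ c`. Read a pigeon of
colour `σ c` as using its `c`-th edge. In the gadget `D(i,i',c,c')` the left clique uses all
`k` colours; if `i` has colour `σ c` then `σ c` is excluded from `l_1` by `i` and from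
`l_2, …, l_{k-1}` by `w`, so `l_k` has colour `σ c`, and likewise `r_k` has colour `σ c'`.
This contradicts the edge `l_k r_k` when `c = c'` and the identification `l_k = r_k` when
`c ≠ c'`, so distinct pigeons use distinct holes. Conversely, for an injective choice of
edges no gadget sees its forbidden pair, and as `k ≥ 3` each clique can be coloured by a
permutation putting suitable colours on its two special vertices.
-/

theorem Fin.exists_perm_zero_last {k : ℕ} {x y : Fin k} (hxy : x ≠ y) :
    ∃ σ : Equiv.Perm (Fin k),
      ∀ a, (σ a = x ↔ (a : ℕ) = 0) ∧ (σ a = y ↔ (a : ℕ) = k - 1) := by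
  have hk : 0 < k := x.pos
  set a₀ : Fin k := ⟨0, hk⟩
  set a₁ : Fin k := ⟨k - 1, by omega⟩
  have h01 : a₀ ≠ a₁ := by
    intro h
    have : k = 1 := by simp [a₀, a₁, Fin.ext_iff] at h; omega
    subst this
    exact hxy (Subsingleton.elim x y)
  set z := Equiv.swap a₀ x y
  have hz : z ≠ a₀ := by simpa [z, Equiv.swap_apply_eq_iff] using hxy.symm
  set σ := Equiv.swap a₀ x * Equiv.swap a₁ z
  have hσ₀ : σ a₀ = x := by
    simp [σ, Equiv.swap_apply_of_ne_of_ne h01 hz.symm]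
  have hσ₁ : σ a₁ = y := by simp [σ, z]
  refine ⟨σ, fun a => ⟨?_, ?_⟩⟩
  · rw [← hσ₀, σ.injective.eq_iff, Fin.ext_iff]
  · rw [← hσ₁, σ.injective.eq_iff, Fin.ext_iff]

theorem Fin.apply_last_eq_of_forall_ne {k : ℕ} {l : Fin k → Fin k} (hl : Function.Injective l)
    {x : Fin k} (h0 : ∀ a : Fin k, (a : ℕ) = 0 → l a ≠ x)
    (hmid : ∀ a : Fin k, 1 ≤ (a : ℕ) → (a : ℕ) ≤ k - 2 → l a ≠ x)
    {a : Fin k} (ha : (a : ℕ) = k - 1) : l a = x := by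
  obtain ⟨b, rfl⟩ := Finite.injective_iff_surjective.1 hl x
  have : (b : ℕ) = k - 1 := by
    by_contra hb
    by_cases hb0 : (b : ℕ) = 0
    · exact h0 b hb0 rfl
    · exact hmid b (by omega) (by omega) rfl
  rw [Fin.ext (ha.trans this.symm)]

-- `x, y` and `x', y'` are the colours of `l_1, l_k` and `r_1, r_k`.
theorem exists_gadget_endpoints {k : ℕ} (hk : 3 ≤ k) {d d' c c' : Fin k}
    (h : ¬(d = c ∧ d' = c')) :
    ∃ x y x' y' : Fin k, x ≠ y ∧ x' ≠ y' ∧ x ≠ d ∧ x' ≠ d' ∧ (c = x ∨ c = y) ∧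
      (c' = x' ∨ c' = y') ∧ (c = c' ↔ y ≠ y') := by
  wlog hdc : d ≠ c generalizing d d' c c'
  · obtain ⟨x', y', x, y, h⟩ :=
      this (d := d') (d' := d) (c := c') (c' := c) (by tauto) (by tauto)
    exact ⟨x, y, x', y', by simp only [eq_comm (a := c), ne_comm (a := y)] at h ⊢; tauto⟩
  have third (a b : Fin k) : ∃ z, z ≠ a ∧ z ≠ b :=
    ENat.exists_ne_ne_of_three_le (by simpa using hk) a b
  obtain ⟨z, hzd', hzc'⟩ := third d' c'
  by_cases hcc : c = c'
  · subst hcc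
    obtain ⟨w, hwc, -⟩ := third c c
    exact ⟨c, w, z, c, hwc.symm, hzc', Ne.symm hdc, hzd', .inl rfl, .inr rfl,
      by simpa using hwc⟩
  · exact ⟨c, c', z, c', hcc, hzc', Ne.symm hdc, hzd', .inl rfl, .inr rfl, by simpa using hcc⟩

-- The conditions are the edges of `D(i,i',c,c')` when `i, i', w, w'` have colours `d, d', c, c'`.
theorem exists_gadget_perms {k : ℕ} (hk : 3 ≤ k) {d d' c c' : Fin k}
    (h : ¬(d = c ∧ d' = c')) :
    ∃ L R : Equiv.Perm (Fin k),
      (∀ a : Fin k, (a : ℕ) = 0 → L a ≠ d) ∧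
      (∀ a : Fin k, (a : ℕ) = 0 → R a ≠ d') ∧
      (∀ a : Fin k, 1 ≤ (a : ℕ) → (a : ℕ) ≤ k - 2 → L a ≠ c) ∧
      (∀ a : Fin k, 1 ≤ (a : ℕ) → (a : ℕ) ≤ k - 2 → R a ≠ c') ∧
      (∀ a : Fin k, (a : ℕ) = k - 1 → (L a = R a ↔ c ≠ c')) := by
  obtain ⟨x, y, x', y', hxy, hxy', hxd, hxd', hc, hc', hcc⟩ := exists_gadget_endpoints hk h
  obtain ⟨L, hL⟩ := Fin.exists_perm_zero_last hxy
  obtain ⟨R, hR⟩ := Fin.exists_perm_zero_last hxy'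
  refine ⟨L, R, fun a ha => (hL a).1.2 ha ▸ hxd, fun a ha => (hR a).1.2 ha ▸ hxd',
    ?_, ?_, ?_⟩
  · rintro a h1 h2 rfl
    rcases hc with hc | hc
    · have := (hL a).1.1 hc; omega
    · have := (hL a).2.1 hc; omega
  · rintro a h1 h2 rfl
    rcases hc' with hc' | hc'
    · have := (hR a).1.1 hc'; omega
    · have := (hR a).2.1 hc'; omega
  · intro a ha
    rw [(hL a).2.2 ha, (hR a).2.2 ha, Ne, hcc, not_not]

section PathPower

variable {M k : ℕ}

theorem pathPower_colour_ne {α : Type*} {g : Fin M → α}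
    (hg : ∀ s t : Fin M, (s : ℕ) < t → (t : ℕ) < s + k → g s ≠ g t)
    {s t : Fin M} (hst : s ≠ t) (hs : (s : ℕ) < t + k) (ht : (t : ℕ) < s + k) :
    g s ≠ g t := by
  rcases Fin.lt_or_lt_of_ne hst with h | h
  · exact hg s t h ht
  · exact (hg t s h hs).symm

theorem pathPower_colour_eq_mod {g : Fin M → Fin k}
    (hg : ∀ s t : Fin M, (s : ℕ) < t → (t : ℕ) < s + k → g s ≠ g t)
    (t : ℕ) (ht : t < M) :
    g ⟨t, ht⟩ = g ⟨t % k, (Nat.mod_le t k).trans_lt ht⟩ := by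
  induction t using Nat.strong_induction_on with
  | _ t ih =>
  by_cases htk : t < k
  · simp only [Nat.mod_eq_of_lt htk]
  -- `t - k, …, t - 1` use every colour, and all but `t - k` are adjacent to `t`
  have window : Function.Injective fun j : Fin k => g ⟨t - k + j, by omega⟩ := by
    intro i j hij
    by_contra hne
    exact pathPower_colour_ne hg (by simpa [Fin.ext_iff] using hne)
      (by simp; omega) (by simp; omega) hij
  obtain ⟨j, hj⟩ := Finite.injective_iff_surjective.1 window (g ⟨t, ht⟩)
  have hj0 : (j : ℕ) = 0 := by
    by_contra hj0
    exact hg _ _ (by simp; omega) (by simp; omega) hj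
  calc g ⟨t, ht⟩ = g ⟨t - k, by omega⟩ := by rw [← hj]; simp [hj0]
    _ = g ⟨(t - k) % k, _⟩ := ih (t - k) (by omega) _
    _ = g ⟨t % k, _⟩ := by simp only [← Nat.mod_eq_sub_mod (not_lt.1 htk)]

end PathPower

theorem SimpleGraph.fromRel_adj_ne {V α : Type*} {r : V → V → Prop} {χ : V → α}
    (h : ∀ u v, r u v → χ u ≠ χ v) {u v : V} (huv : (SimpleGraph.fromRel r).Adj u v) :
    χ u ≠ χ v :=
  ((SimpleGraph.fromRel_adj r u v).1 huv).2.elim (h u v) fun h' => (h v u h').symm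

section Gadget

variable {k : ℕ} {e : I → Fin k → J}

omit [Fintype I] [DecidableEq I] [DecidableEq J] in
theorem Lv_injective (q : Coll k e) : Function.Injective (Lv q) := fun _ _ h =>
  congrArg (fun x : GadV k e => x.2.1.2) h

omit [Fintype I] [DecidableEq I] [DecidableEq J] in
theorem Rv_of_ne (q : Coll k e) (hcc : q.1.2.1 ≠ q.1.2.2) {a : Fin k} (ha : (a : ℕ) = k - 1) :
    Rv q a = Lv q a :=
  dif_pos ⟨ha, hcc⟩

omit [Fintype I] [DecidableEq I] [DecidableEq J] in
theorem Rv_of_not (q : Coll k e) {a : Fin k} (h : ¬((a : ℕ) = k - 1 ∧ q.1.2.1 ≠ q.1.2.2)) :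
    Rv q a = ⟨q, ⟨(true, a), fun h' => h ⟨h'.2.1, h'.2.2⟩⟩⟩ :=
  dif_neg h

omit [Fintype I] [DecidableEq I] [DecidableEq J] in
theorem Rv_injective (q : Coll k e) : Function.Injective (Rv q) := by
  have snd (a : Fin k) : (Rv q a).2.1.2 = a := by
    by_cases h : (a : ℕ) = k - 1 ∧ q.1.2.1 ≠ q.1.2.2
    · rw [Rv_of_ne q h.2 h.1]; rfl
    · rw [Rv_of_not q h]
  intro a b h
  rw [← snd a, h, snd]

omit [Fintype I] [DecidableEq I] [DecidableEq J] in
theorem Lv_ne_Rv (q : Coll k e) (hcc : q.1.2.1 = q.1.2.2) (a b : Fin k) : Lv q a ≠ Rv q b := by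
  rw [Rv_of_not q fun h => h.2 hcc]
  exact fun h => Bool.false_ne_true (congrArg (fun x : GadV k e => x.2.1.1) h)

theorem preV_injective : Function.Injective (preV : Fin (Mtotal k e) → ColV k e) :=
  fun _ _ h => Sum.inr_injective (Sum.inr_injective h)

theorem gadV_injective : Function.Injective (gadV : GadV k e → ColV k e) :=
  fun _ _ h => Sum.inl_injective (Sum.inr_injective h)

theorem pigV_ne_gadV (i : I) (x : GadV k e) : pigV i ≠ gadV x :=
  Sum.inl_ne_inr

theorem preV_ne_gadV (t : Fin (Mtotal k e)) (x : GadV k e) : preV t ≠ gadV x :=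
  fun h => Sum.inr_ne_inl (Sum.inr_injective h)

theorem adj_preV {s t : Fin (Mtotal k e)} (h1 : (s : ℕ) < t) (h2 : (t : ℕ) < s + k) :
    (colourGraph k e).Adj (preV s) (preV t) := by
  refine (SimpleGraph.fromRel_adj _ _ _).2 ⟨?_, .inl ?_⟩
  · exact preV_injective.ne (Fin.ne_of_lt h1)
  · left; exact ⟨s, t, h1, h2, rfl, rfl⟩

theorem adj_Lv_Lv (q : Coll k e) {a b : Fin k} (hab : a ≠ b) :
    (colourGraph k e).Adj (gadV (Lv q a)) (gadV (Lv q b)) := by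
  refine (SimpleGraph.fromRel_adj _ _ _).2 ⟨?_, .inl ?_⟩
  · exact gadV_injective.ne ((Lv_injective q).ne hab)
  · right; left; exact ⟨q, a, b, hab, rfl, rfl⟩

theorem adj_Rv_Rv (q : Coll k e) {a b : Fin k} (hab : a ≠ b) :
    (colourGraph k e).Adj (gadV (Rv q a)) (gadV (Rv q b)) := by
  refine (SimpleGraph.fromRel_adj _ _ _).2 ⟨?_, .inl ?_⟩
  · exact gadV_injective.ne ((Rv_injective q).ne hab)
  · right; right; left; exact ⟨q, a, b, hab, rfl, rfl⟩

theorem adj_Lv_Rv (q : Coll k e) (hcc : q.1.2.1 = q.1.2.2) {a : Fin k} (ha : (a : ℕ) = k - 1) :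
    (colourGraph k e).Adj (gadV (Lv q a)) (gadV (Rv q a)) := by
  refine (SimpleGraph.fromRel_adj _ _ _).2 ⟨?_, .inl ?_⟩
  · exact gadV_injective.ne (Lv_ne_Rv q hcc a a)
  · right; right; right; left; exact ⟨q, a, hcc, ha, rfl, rfl⟩

theorem adj_pigV_Lv (q : Coll k e) {a : Fin k} (ha : (a : ℕ) = 0) :
    (colourGraph k e).Adj (pigV q.1.1.1) (gadV (Lv q a)) := by
  refine (SimpleGraph.fromRel_adj _ _ _).2 ⟨pigV_ne_gadV _ _, .inl ?_⟩
  right; right; right; right; left; exact ⟨q, a, ha, rfl, rfl⟩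

theorem adj_pigV_Rv (q : Coll k e) {a : Fin k} (ha : (a : ℕ) = 0) :
    (colourGraph k e).Adj (pigV q.1.1.2) (gadV (Rv q a)) := by
  refine (SimpleGraph.fromRel_adj _ _ _).2 ⟨pigV_ne_gadV _ _, .inl ?_⟩
  right; right; right; right; right; left; exact ⟨q, a, ha, rfl, rfl⟩

theorem adj_wpos_Lv (q : Coll k e) {a : Fin k} (h1 : 1 ≤ (a : ℕ)) (h2 : (a : ℕ) ≤ k - 2) :
    (colourGraph k e).Adj (preV (wpos q)) (gadV (Lv q a)) := by
  refine (SimpleGraph.fromRel_adj _ _ _).2 ⟨preV_ne_gadV _ _, .inl ?_⟩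
  right; right; right; right; right; right; left; exact ⟨q, a, h1, h2, rfl, rfl⟩

theorem adj_wpos'_Rv (q : Coll k e) {a : Fin k} (h1 : 1 ≤ (a : ℕ)) (h2 : (a : ℕ) ≤ k - 2) :
    (colourGraph k e).Adj (preV (wpos' q)) (gadV (Rv q a)) := by
  refine (SimpleGraph.fromRel_adj _ _ _).2 ⟨preV_ne_gadV _ _, .inl ?_⟩
  right; right; right; right; right; right; right; exact ⟨q, a, h1, h2, rfl, rfl⟩

theorem wpos_mod (q : Coll k e) : (wpos q : ℕ) % k = q.1.2.1 := by
  simp [wpos, Nat.mod_eq_of_lt q.1.2.1.isLt]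

theorem wpos'_mod (q : Coll k e) : (wpos' q : ℕ) % k = q.1.2.2 := by
  simp [wpos', Nat.mod_eq_of_lt q.1.2.2.isLt]

/-- By `colour_preV_of_mod`, the colour of every `u_t` with `t ≡ c (mod k)`. -/
def preColour (χ : ColV k e → Fin k) (c : Fin k) : Fin k :=
  χ (preV ⟨c, c.isLt.trans_le (Nat.le_add_left k _)⟩)

section ProperColouring

variable {χ : ColV k e → Fin k}

theorem preV_colour_ne (hχ : ∀ u v, (colourGraph k e).Adj u v → χ u ≠ χ v)
    (s t : Fin (Mtotal k e)) (h1 : (s : ℕ) < t) (h2 : (t : ℕ) < s + k) :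
    χ (preV s) ≠ χ (preV t) :=
  hχ _ _ (adj_preV h1 h2)

theorem preColour_injective (hχ : ∀ u v, (colourGraph k e).Adj u v → χ u ≠ χ v) :
    Function.Injective (preColour χ) := fun a b h => by
  by_contra hab
  refine pathPower_colour_ne (g := fun t => χ (preV t)) (preV_colour_ne hχ) ?_ ?_ ?_ h
  · simpa [Fin.ext_iff] using hab
  · simp; omega
  · simp; omega

theorem colour_preV_of_mod (hχ : ∀ u v, (colourGraph k e).Adj u v → χ u ≠ χ v)
    {t : Fin (Mtotal k e)} {c : Fin k} (h : (t : ℕ) % k = c) : χ (preV t) = preColour χ c :=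
  (pathPower_colour_eq_mod (g := fun t => χ (preV t)) (preV_colour_ne hχ) t t.isLt).trans
    (by simp only [preColour, h])

theorem gadget_forbids (hχ : ∀ u v, (colourGraph k e).Adj u v → χ u ≠ χ v) (q : Coll k e) :
    ¬(χ (pigV q.1.1.1) = preColour χ q.1.2.1 ∧ χ (pigV q.1.1.2) = preColour χ q.1.2.2) := by
  rintro ⟨hi, hi'⟩
  have hk : 0 < k := q.1.2.1.pos
  set last : Fin k := ⟨k - 1, by omega⟩
  have hL : χ (gadV (Lv q last)) = preColour χ q.1.2.1 :=
    Fin.apply_last_eq_of_forall_ne (l := fun a => χ (gadV (Lv q a)))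
      (fun a b h => not_not.1 fun hab => hχ _ _ (adj_Lv_Lv q hab) h)
      (fun a ha => hi ▸ (hχ _ _ (adj_pigV_Lv q ha)).symm)
      (fun a h1 h2 =>
        colour_preV_of_mod hχ (wpos_mod q) ▸ (hχ _ _ (adj_wpos_Lv q h1 h2)).symm)
      rfl
  have hR : χ (gadV (Rv q last)) = preColour χ q.1.2.2 :=
    Fin.apply_last_eq_of_forall_ne (l := fun a => χ (gadV (Rv q a)))
      (fun a b h => not_not.1 fun hab => hχ _ _ (adj_Rv_Rv q hab) h)
      (fun a ha => hi' ▸ (hχ _ _ (adj_pigV_Rv q ha)).symm)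
      (fun a h1 h2 =>
        colour_preV_of_mod hχ (wpos'_mod q) ▸ (hχ _ _ (adj_wpos'_Rv q h1 h2)).symm)
      rfl
  by_cases hcc : q.1.2.1 = q.1.2.2
  · exact hχ _ _ (adj_Lv_Rv q hcc rfl) (by rw [hL, hR, hcc])
  · exact hcc (preColour_injective hχ (by rw [← hL, ← hR, Rv_of_ne q hcc rfl]))

theorem exists_injective_of_proper (hχ : ∀ u v, (colourGraph k e).Adj u v → χ u ≠ χ v) :
    ∃ f : I → J, Function.Injective f ∧ ∀ i, ∃ c : Fin k, f i = e i c := by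
  choose c hc using fun i =>
    Finite.injective_iff_surjective.1 (preColour_injective hχ) (χ (pigV i))
  refine ⟨fun i => e i (c i), fun i i' h => ?_, fun i => ⟨c i, rfl⟩⟩
  by_contra hii
  exact gadget_forbids hχ ⟨((i, i'), (c i, c i')), hii, h⟩ ⟨(hc i).symm, (hc i').symm⟩

end ProperColouring

omit [Fintype I] [DecidableEq I] [DecidableEq J] in
def gadgetColour (L R : Coll k e → Equiv.Perm (Fin k)) (x : GadV k e) : Fin k :=
  cond x.2.1.1 (R x.1 x.2.1.2) (L x.1 x.2.1.2)

omit [Fintype I] [DecidableEq I] [DecidableEq J] in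
theorem gadgetColour_Rv {L R : Coll k e → Equiv.Perm (Fin k)}
    (hLR : ∀ q : Coll k e, q.1.2.1 ≠ q.1.2.2 →
      ∀ a : Fin k, (a : ℕ) = k - 1 → L q a = R q a)
    (q : Coll k e) (a : Fin k) : gadgetColour L R (Rv q a) = R q a := by
  by_cases h : (a : ℕ) = k - 1 ∧ q.1.2.1 ≠ q.1.2.2
  · rw [Rv_of_ne q h.2 h.1]
    exact hLR q h.2 a h.1
  · rw [Rv_of_not q h]
    rfl

theorem exists_proper_of_injective (hk : 3 ≤ k) {f : I → J} (hf : Function.Injective f)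
    (hfe : ∀ i, ∃ c : Fin k, f i = e i c) :
    ∃ χ : ColV k e → Fin k, ∀ u v, (colourGraph k e).Adj u v → χ u ≠ χ v := by
  choose c hc using hfe
  have hq (q : Coll k e) : ¬(c q.1.1.1 = q.1.2.1 ∧ c q.1.1.2 = q.1.2.2) := by
    rintro ⟨h, h'⟩
    exact q.2.1 (hf (by rw [hc, hc, h, h']; exact q.2.2))
  choose L R hL0 hR0 hLmid hRmid hLR using fun q => exists_gadget_perms hk (hq q)
  have hRv := gadgetColour_Rv fun q hcc a ha => (hLR q a ha).2 hcc
  refine ⟨Sum.elim c (Sum.elim (gadgetColour L R) fun t => ⟨t % k, Nat.mod_lt _ (by omega)⟩),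
    fun u v huv => SimpleGraph.fromRel_adj_ne ?_ huv⟩
  rintro u v (⟨s, t, h1, h2, rfl, rfl⟩ | ⟨q, a, b, hab, rfl, rfl⟩ |
    ⟨q, a, b, hab, rfl, rfl⟩ | ⟨q, a, hcc, ha, rfl, rfl⟩ | ⟨q, a, ha, rfl, rfl⟩ |
    ⟨q, a, ha, rfl, rfl⟩ | ⟨q, a, h1, h2, rfl, rfl⟩ | ⟨q, a, h1, h2, rfl, rfl⟩)
  · intro h
    refine h1.ne (Nat.ModEq.eq_of_abs_lt (congrArg Fin.val h) ?_)
    rw [abs_sub_lt_iff]; omega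
  · exact (L q).injective.ne hab
  · exact (hRv q a).trans_ne ((R q).injective.ne hab) |>.trans_eq (hRv q b).symm
  · exact fun h => (hLR q a ha).1 (h.trans (hRv q a)) hcc
  · exact (hL0 q a ha).symm
  · exact ((hR0 q a ha).symm).trans_eq (hRv q a).symm
  · exact (Fin.ext (wpos_mod q)).trans_ne (hLmid q a h1 h2).symm
  · exact (Fin.ext (wpos'_mod q)).trans_ne ((hRmid q a h1 h2).symm.trans_eq (hRv q a).symm)

end Gadget

theorem stmt_13_general (k : ℕ) (hk : 3 ≤ k) (e : I → Fin k → J) :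
    (∃ χ : ColV k e → Fin k,
      ∀ u v, (colourGraph k e).Adj u v → χ u ≠ χ v) ↔
    (∃ f : I → J, Function.Injective f ∧ ∀ i, ∃ c : Fin k, f i = e i c) :=
  ⟨fun ⟨_, hχ⟩ => exists_injective_of_proper hχ,
    fun ⟨_, hf, hfe⟩ => exists_proper_of_injective hk hf hfe⟩

theorem stmt_13 (k : ℕ) (hk : 3 ≤ k) (e : I → Fin k → J)
    (he : ∀ i, Function.Injective (e i)) :
    (∃ χ : ColV k e → Fin k,
      ∀ u v, (colourGraph k e).Adj u v → χ u ≠ χ v) ↔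
    (∃ f : I → J, Function.Injective f ∧ ∀ i, ∃ c : Fin k, f i = e i c) :=
  stmt_13_general k hk e

end ColouringReduction
end

section
/- Suppose for a set S of linear inequalities over 0/1 variables and a fixed variable x with value b ∈ {0,1}, S ∪ {x = b} has a cutting planes derivation of ∑_i a_i x_i ≤ γ of length L. Then for some natural number K there is a cutting planes derivation from S alone of the inequality (−1)^{1−b}·K·(x − b) + ∑_i a_i x_i ≤ γ of length O(L). -/
/-- A linear inequality `∑_v a v · x v ≤ b` over 0/1-valued variables
indexed by `ν`. -/
structure LinIneq (ν : Type) where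
  a : ν → ℤ
  b : ℤ

/-- Cutting planes derivations from a set `S` of inequalities, together with
their length (number of derivation steps).  Axioms: `x ≤ 1` and `-x ≤ 0`
(i.e. `x ≥ 0`) for every variable, and every inequality of `S`; rules:
addition of two inequalities, multiplication by a nonnegative integer, and
division of all coefficients by a common positive divisor `c`, rounding the
constant term down. -/
inductive CP {ν : Type} [DecidableEq ν] (S : Set (LinIneq ν)) :
    LinIneq ν → ℕ → Prop where
  | hyp (I : LinIneq ν) : I ∈ S → CP S I 1
  | ax_le (v : ν) : CP S ⟨fun u => if u = v then 1 else 0, 1⟩ 1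
  | ax_ge (v : ν) : CP S ⟨fun u => if u = v then -1 else 0, 0⟩ 1
  | add {I₁ I₂ : LinIneq ν} {L₁ L₂ : ℕ} : CP S I₁ L₁ → CP S I₂ L₂ →
      CP S ⟨fun v => I₁.a v + I₂.a v, I₁.b + I₂.b⟩ (L₁ + L₂ + 1)
  | mul (c : ℕ) {I : LinIneq ν} {L : ℕ} : CP S I L →
      CP S ⟨fun v => (c : ℤ) * I.a v, (c : ℤ) * I.b⟩ (L + 1)
  | div (c : ℕ) (hc : 0 < c) {I : LinIneq ν} {L : ℕ}
      (hdvd : ∀ v, (c : ℤ) ∣ I.a v) : CP S I L →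
      CP S ⟨fun v => I.a v / (c : ℤ), ⌊(I.b : ℚ) / (c : ℚ)⌋⟩ (L + 1)

section Aux

variable {ν : Type} [DecidableEq ν]

lemma CP_cast {S : Set (LinIneq ν)} {I J : LinIneq ν} {L : ℕ}
    (h : CP S I L) (ha : ∀ v, I.a v = J.a v) (hb : I.b = J.b) : CP S J L := by
  obtain ⟨Ia, Ib⟩ := I
  obtain ⟨Ja, Jb⟩ := J
  have h1 : Ia = Ja := funext ha
  simp only at hb
  subst h1; subst hb; exact h

lemma CP_zero (S : Set (LinIneq ν)) (v : ν) :
    CP S ⟨fun _ => (0 : ℤ), 0⟩ 2 := by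
  have := CP.mul (S := S) 0 (CP.ax_le v)
  exact CP_cast this (by intro u; simp) (by simp)

lemma CP_helper (S : Set (LinIneq ν)) (x₀ : ν) (b : ℕ) (hb : b ≤ 1) :
    CP S ⟨fun u => if u = x₀ then (-1 : ℤ) ^ (1 - b) else 0,
          (-1 : ℤ) ^ (1 - b) * b⟩ 1 := by
  interval_cases b
  · exact CP_cast (CP.ax_ge x₀) (by intro u; simp) (by simp)
  · exact CP_cast (CP.ax_le x₀) (by intro u; simp) (by simp)

lemma CP_main {S : Set (LinIneq ν)} (x₀ : ν) (b : ℕ) (hb : b ≤ 1)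
    {I : LinIneq ν} {L : ℕ}
    (h : CP (S ∪ {⟨fun u => if u = x₀ then 1 else 0, (b : ℤ)⟩,
                  ⟨fun u => if u = x₀ then -1 else 0, -(b : ℤ)⟩}) I L) :
    ∃ (K L' : ℕ), L' ≤ 5 * L ∧
      CP S ⟨fun u => I.a u + (if u = x₀ then (-1 : ℤ) ^ (1 - b) * K else 0),
            I.b + (-1 : ℤ) ^ (1 - b) * K * b⟩ L' := by
  set s : ℤ := (-1) ^ (1 - b) with hs
  induction h with
  | hyp I hI =>
    rcases hI with hI | hI
    · refine ⟨0, 1, by omega, CP_cast (CP.hyp I hI) (fun v => by simp) (by simp)⟩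
    · simp only [Set.mem_insert_iff, Set.mem_singleton_iff] at hI
      interval_cases b
      · rcases hI with rfl | rfl
        · -- x ≤ 0, s = -1, K = 1 gives zero inequality
          refine ⟨1, 2, by omega, CP_cast (CP_zero S x₀) (fun v => ?_) ?_⟩
          · simp [hs]; by_cases hv : v = x₀ <;> simp [hv]
          · simp [hs]
        · -- -x ≤ 0 is ax_ge, K = 0
          refine ⟨0, 1, by omega, CP_cast (CP.ax_ge x₀) (fun v => by simp) (by simp)⟩
      · rcases hI with rfl | rfl
        · -- x ≤ 1 is ax_le, K = 0
          refine ⟨0, 1, by omega, CP_cast (CP.ax_le x₀) (fun v => by simp) (by simp)⟩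
        · -- -x ≤ -1, s = 1, K = 1 gives zero inequality
          refine ⟨1, 2, by omega, CP_cast (CP_zero S x₀) (fun v => ?_) ?_⟩
          · simp [hs]; by_cases hv : v = x₀ <;> simp [hv]
          · simp [hs]
  | ax_le v =>
    exact ⟨0, 1, by omega, CP_cast (CP.ax_le v) (fun u => by simp) (by simp)⟩
  | ax_ge v =>
    exact ⟨0, 1, by omega, CP_cast (CP.ax_ge v) (fun u => by simp) (by simp)⟩
  | add h₁ h₂ ih₁ ih₂ =>
    obtain ⟨K₁, L₁', hL₁, hc₁⟩ := ih₁
    obtain ⟨K₂, L₂', hL₂, hc₂⟩ := ih₂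
    refine ⟨K₁ + K₂, L₁' + L₂' + 1, by omega,
      CP_cast (CP.add hc₁ hc₂) (fun v => ?_) ?_⟩
    · simp only
      by_cases hv : v = x₀ <;> simp [hv] <;> push_cast <;> ring
    · simp only; push_cast; ring
  | mul c h ih =>
    obtain ⟨K, L', hL, hcp⟩ := ih
    refine ⟨c * K, L' + 1, by omega, CP_cast (CP.mul c hcp) (fun v => ?_) ?_⟩
    · simp only
      by_cases hv : v = x₀ <;> simp [hv, mul_add] <;> push_cast <;> ring
    · simp only; push_cast; ring
  | div c hc hdvd h ih =>
    rename_i II LL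
    obtain ⟨K, L', hL, hcp⟩ := ih
    set K' : ℕ := K / c + 1 with hK'
    have hKle : K ≤ c * K' := by
      conv_lhs => rw [← Nat.div_add_mod K c]
      rw [hK', Nat.mul_add, Nat.mul_one]
      exact Nat.add_le_add_left (Nat.mod_lt K hc).le _
    set t : ℕ := c * K' - K with ht
    have hKtn : K + t = c * K' := Nat.add_sub_cancel' hKle
    have hKt : (K : ℤ) + t = (c : ℤ) * K' := by exact_mod_cast hKtn
    have hcne : (c : ℤ) ≠ 0 := by exact_mod_cast hc.ne'
    -- derive t times the helper axiom
    have hA := CP.mul (S := S) t (CP_helper S x₀ b hb)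
    have hadd := CP.add hcp hA
    have hdvd' : ∀ v, (c : ℤ) ∣
        ((II.a v + (if v = x₀ then s * K else 0)) + (t : ℤ) * (if v = x₀ then s else 0)) := by
      intro v
      by_cases hv : v = x₀
      · subst hv
        rw [if_pos rfl, if_pos rfl]
        have heq : II.a v + s * K + t * s = II.a v + (c : ℤ) * (s * K') := by
          rw [show (c : ℤ) * (s * K') = s * ((c : ℤ) * K') by ring, ← hKt]; ring
        rw [heq]
        exact dvd_add (hdvd v) ⟨s * K', rfl⟩
      · simpa [hv] using hdvd v
    have hdiv := CP.div c hc hdvd' hadd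
    refine ⟨K', L' + 2 + 1 + 1, by omega, CP_cast hdiv (fun v => ?_) ?_⟩
    · simp only
      by_cases hv : v = x₀
      · subst hv
        rw [if_pos rfl, if_pos rfl, if_pos rfl]
        have h1 : II.a v + s * (K : ℤ) + (t : ℤ) * s = II.a v + (c : ℤ) * (s * K') := by
          rw [show (c : ℤ) * (s * K') = s * ((c : ℤ) * K') by ring, ← hKt]; ring
        rw [h1, Int.add_mul_ediv_left _ _ hcne]
      · simp [hv]
    · simp only
      have h2 : (II.b + s * K * b + (t : ℤ) * (s * b)) = II.b + (c : ℤ) * (s * K' * b) := by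
        rw [show (c : ℤ) * (s * K' * b) = s * ((c : ℤ) * K') * b by ring, ← hKt]; ring
      rw [h2, Rat.floor_intCast_div_natCast, Rat.floor_intCast_div_natCast,
        Int.add_mul_ediv_left _ _ hcne]

end Aux

theorem stmt_15 :
    ∃ C : ℕ, ∀ (ν : Type) (_ : DecidableEq ν) (S : Set (LinIneq ν)) (x₀ : ν)
      (b : ℕ), b ≤ 1 → ∀ (a : ν → ℤ) (γ : ℤ) (L : ℕ),
      CP (S ∪ {⟨fun u => if u = x₀ then 1 else 0, (b : ℤ)⟩,
               ⟨fun u => if u = x₀ then -1 else 0, -(b : ℤ)⟩}) ⟨a, γ⟩ L →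
      ∃ (K : ℕ) (L' : ℕ), L' ≤ C * L ∧
        CP S ⟨fun u => a u + (if u = x₀ then (-1 : ℤ) ^ (1 - b) * (K : ℤ) else 0),
              γ + (-1 : ℤ) ^ (1 - b) * (K : ℤ) * (b : ℤ)⟩ L' := by
  refine ⟨5, fun ν _ S x₀ b hb a γ L h => ?_⟩
  obtain ⟨K, L', hL, hcp⟩ := CP_main x₀ b hb h
  exact ⟨K, L', hL, hcp⟩
end

section
/- If for a set S of linear inequalities encoding k-colourability of a graph G and a fixed list of vertices u_1,…,u_ℓ, for every tuple of colours (c_1,…,c_ℓ) ∈ [k]^ℓ the system S ∪ {x_{u_1,c_1} = 1, …, x_{u_ℓ,c_ℓ} = 1} has a cutting planes refutation of length at most L, then S itself has a cutting planes refutation of length k^{O(ℓ)}·L. -/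
/-- The linear inequalities encoding `k`-colourability of a graph `G`:
`∑_j x_{v,j} ≥ 1` for every vertex `v` (written `∑_j -x_{v,j} ≤ -1`),
`x_{v,j} + x_{v,j'} ≤ 1` for every vertex `v` and colours `j ≠ j'`, and
`x_{u,j} + x_{v,j} ≤ 1` for every edge `(u,v)` and colour `j`. -/
def colAx {V : Type} [DecidableEq V] (G : SimpleGraph V) (k : ℕ) :
    Set (LinIneq (V × Fin k)) :=
  {I | (∃ v : V, I = ⟨fun p => if p.1 = v then -1 else 0, -1⟩) ∨
       (∃ (v : V) (j j' : Fin k), j ≠ j' ∧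
          I = ⟨fun p => if p = (v, j) ∨ p = (v, j') then 1 else 0, 1⟩) ∨
       (∃ (u v : V) (j : Fin k), G.Adj u v ∧
          I = ⟨fun p => if p = (u, j) ∨ p = (v, j) then 1 else 0, 1⟩)}

attribute [ext] LinIneq

namespace LinIneq

variable {ν : Type}

instance : Zero (LinIneq ν) := ⟨⟨fun _ => 0, 0⟩⟩
instance : Add (LinIneq ν) := ⟨fun I J => ⟨fun v => I.a v + J.a v, I.b + J.b⟩⟩
instance : SMul ℕ (LinIneq ν) := ⟨fun c I => ⟨fun v => (c : ℤ) * I.a v, (c : ℤ) * I.b⟩⟩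

@[simp] theorem zero_a (v : ν) : (0 : LinIneq ν).a v = 0 := rfl
@[simp] theorem zero_b : (0 : LinIneq ν).b = 0 := rfl
@[simp] theorem add_a (I J : LinIneq ν) (v : ν) : (I + J).a v = I.a v + J.a v := rfl
@[simp] theorem add_b (I J : LinIneq ν) : (I + J).b = I.b + J.b := rfl
@[simp] theorem nsmul_a (c : ℕ) (I : LinIneq ν) (v : ν) : (c • I).a v = c * I.a v := rfl
@[simp] theorem nsmul_b (c : ℕ) (I : LinIneq ν) : (c • I).b = c * I.b := rfl

instance : AddCommMonoid (LinIneq ν) :=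
  Function.Injective.addCommMonoid (fun I => (I.a, I.b))
    (fun I J h => by ext <;> simp_all [Prod.ext_iff]) rfl (fun _ _ => rfl)
    (fun _ _ => by ext <;> simp [nsmul_eq_mul])

@[simp] theorem sum_a {ι : Type*} (s : Finset ι) (f : ι → LinIneq ν) (v : ν) :
    (∑ i ∈ s, f i).a v = ∑ i ∈ s, (f i).a v :=
  map_sum (⟨⟨fun I : LinIneq ν => I.a v, rfl⟩, fun _ _ => rfl⟩ : LinIneq ν →+ ℤ) f s

@[simp] theorem sum_b {ι : Type*} (s : Finset ι) (f : ι → LinIneq ν) :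
    (∑ i ∈ s, f i).b = ∑ i ∈ s, (f i).b :=
  map_sum (⟨⟨fun I : LinIneq ν => I.b, rfl⟩, fun _ _ => rfl⟩ : LinIneq ν →+ ℤ) f s

def falsum : LinIneq ν := ⟨fun _ => 0, -1⟩

def divFloor (I : LinIneq ν) (c : ℕ) : LinIneq ν := ⟨fun v => I.a v / c, ⌊(I.b : ℚ) / c⌋⟩

theorem divFloor_add_mul_nsmul (I J : LinIneq ν) {c : ℕ} (hc : c ≠ 0) (q : ℕ) :
    (I + (c * q) • J).divFloor c = I.divFloor c + q • J := by
  have hc' : (c : ℤ) ≠ 0 := by exact_mod_cast hc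
  ext <;> simp only [divFloor, add_a, add_b, nsmul_a, nsmul_b, Rat.floor_intCast_div_natCast] <;>
    rw [Nat.cast_mul, mul_assoc, Int.add_mul_ediv_left _ _ hc']

theorem falsum_divFloor {c : ℕ} (hc : 0 < c) : falsum.divFloor c = (falsum : LinIneq ν) := by
  ext
  · simp [divFloor, falsum]
  · rw [divFloor, Rat.floor_intCast_div_natCast, Int.ediv_eq_iff_of_pos (by omega)]
    simp only [falsum]
    omega

variable [DecidableEq ν]

def varLe (p : ν) (b : ℤ) : LinIneq ν := ⟨fun v => if v = p then 1 else 0, b⟩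

def eqOne (p : ν) : Set (LinIneq ν) := {varLe p 1, ⟨fun v => if v = p then -1 else 0, -1⟩}

end LinIneq

open LinIneq

def CPDerivable {ν : Type} [DecidableEq ν] (S : Set (LinIneq ν)) (I : LinIneq ν) (L : ℕ) : Prop :=
  ∃ L₀ ≤ L, CP S I L₀

namespace CP

variable {ν : Type} [DecidableEq ν] {S : Set (LinIneq ν)}

theorem one_le {I : LinIneq ν} {L : ℕ} (h : CP S I L) : 1 ≤ L := by
  induction h <;> omega

theorem add' {I J : LinIneq ν} {L M : ℕ} (hI : CP S I L) (hJ : CP S J M) :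
    CP S (I + J) (L + M + 1) :=
  hI.add hJ

theorem nsmul (c : ℕ) {I : LinIneq ν} {L : ℕ} (h : CP S I L) : CP S (c • I) (L + 1) :=
  h.mul c

theorem divFloor {c : ℕ} (hc : 0 < c) {I : LinIneq ν} {L : ℕ} (hdvd : ∀ v, (c : ℤ) ∣ I.a v)
    (h : CP S I L) : CP S (I.divFloor c) (L + 1) :=
  h.div c hc hdvd

theorem varLe_one (p : ν) : CP S (varLe p 1) 1 :=
  ax_le p

theorem exists_add_nsmul_of_union_eqOne {p : ν} {I : LinIneq ν} {L : ℕ}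
    (h : CP (S ∪ eqOne p) I L) : ∃ m : ℕ, CPDerivable S (I + m • varLe p 1) (5 * L) := by
  induction h with
  | hyp I hI =>
    rcases hI with hI | rfl | rfl
    · exact ⟨0, 1, by omega, by simpa using hyp I hI⟩
    · exact ⟨0, 1, by omega, by simpa using varLe_one p⟩
    · refine ⟨1, 2, by omega, ?_⟩
      convert (ax_ge p).nsmul 0 using 1
      ext v
      · by_cases hv : v = p <;> simp [varLe, hv]
      · simp [varLe]
  | ax_le v => exact ⟨0, 1, by omega, by simpa using ax_le v⟩
  | ax_ge v => exact ⟨0, 1, by omega, by simpa using ax_ge v⟩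
  | @add I₁ I₂ L₁ L₂ _ _ ih₁ ih₂ =>
    obtain ⟨m₁, L₁', hL₁, h₁⟩ := ih₁
    obtain ⟨m₂, L₂', hL₂, h₂⟩ := ih₂
    show ∃ m : ℕ, CPDerivable S (I₁ + I₂ + m • varLe p 1) _
    refine ⟨m₁ + m₂, L₁' + L₂' + 1, by omega, ?_⟩
    convert h₁.add' h₂ using 1
    rw [add_nsmul]; abel
  | @mul c I L _ ih =>
    obtain ⟨m, L', hL', h⟩ := ih
    show ∃ m : ℕ, CPDerivable S (c • I + m • varLe p 1) _
    refine ⟨c * m, L' + 1, by omega, ?_⟩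
    convert h.nsmul c using 1
    rw [smul_add, mul_nsmul']
  | @div c hc I L hdvd _ ih =>
    obtain ⟨m, L', hL', h⟩ := ih
    -- top the `m` surplus copies of `x_p ≤ 1` up to `c * m`, which the division turns back into `m`
    have hcm : m + (c - 1) * m = c * m := by
      have := Nat.le_mul_of_pos_left m hc
      rw [Nat.sub_one_mul]
      omega
    have htop : CP S (I + (c * m) • varLe p 1) (L' + 3) := by
      convert h.add' ((varLe_one p).nsmul ((c - 1) * m)) using 1
      rw [add_assoc, ← add_nsmul, hcm]
    show ∃ m : ℕ, CPDerivable S (I.divFloor c + m • varLe p 1) _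
    refine ⟨m, L' + 4, by omega, ?_⟩
    rw [← divFloor_add_mul_nsmul _ _ hc.ne']
    refine htop.divFloor hc fun v => ?_
    simp only [add_a, nsmul_a, Nat.cast_mul, mul_assoc]
    exact dvd_add (hdvd v) (dvd_mul_right _ _)

theorem derivable_varLe_zero_of_union_eqOne {p : ν} {L : ℕ} (h : CP (S ∪ eqOne p) falsum L) :
    CPDerivable S (varLe p 0) (5 * L + 3) := by
  obtain ⟨m, L', hL', h⟩ := exists_add_nsmul_of_union_eqOne h
  have hsucc : CP S (falsum + ((m + 1) * 1) • varLe p 1) (L' + 2) := by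
    convert h.add' (varLe_one p) using 1
    rw [mul_one, succ_nsmul, add_assoc]
  refine ⟨L' + 3, by omega, ?_⟩
  convert hsucc.divFloor m.succ_pos fun v => ?_ using 1
  · rw [divFloor_add_mul_nsmul _ _ m.succ_ne_zero, falsum_divFloor m.succ_pos, one_nsmul]
    ext <;> simp [falsum, varLe]
  · simp only [add_a, nsmul_a, Nat.cast_mul]
    exact dvd_add (by simp [falsum]) (dvd_mul_of_dvd_left (dvd_mul_right _ _) _)

theorem derivable_add_sum {I : LinIneq ν} {L : ℕ} (hI : CP S I L) {ι : Type*} (s : Finset ι)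
    (f : ι → LinIneq ν) {B : ℕ} (hf : ∀ i ∈ s, CPDerivable S (f i) B) :
    CPDerivable S (I + ∑ i ∈ s, f i) (L + s.card * (B + 1)) := by
  classical
  induction s using Finset.induction_on with
  | empty => exact ⟨L, by simp, by simpa using hI⟩
  | insert a s ha ih =>
    obtain ⟨L₁, hL₁, h₁⟩ := ih fun i hi => hf i (Finset.mem_insert_of_mem hi)
    obtain ⟨L₂, hL₂, h₂⟩ := hf a (Finset.mem_insert_self a s)
    refine ⟨L₁ + L₂ + 1, ?_, ?_⟩
    · rw [Finset.card_insert_of_notMem ha]; nlinarith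
    · convert h₁.add' h₂ using 1
      rw [Finset.sum_insert ha]; abel

end CP

section Colouring

variable {V : Type} [DecidableEq V] {k : ℕ}

def atLeastOneColour (w : V) : LinIneq (V × Fin k) := ⟨fun p => if p.1 = w then -1 else 0, -1⟩

def fixColours {ℓ : ℕ} (u : Fin ℓ → V) (c : Fin ℓ → Fin k) : Set (LinIneq (V × Fin k)) :=
  ⋃ t, eqOne (u t, c t)

theorem fixColours_cons {ℓ : ℕ} (u : Fin (ℓ + 1) → V) (j : Fin k) (c : Fin ℓ → Fin k) :
    fixColours u (Fin.cons j c) = eqOne (u 0, j) ∪ fixColours (Fin.tail u) c := by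
  ext I
  simp [fixColours, Fin.exists_fin_succ, Fin.tail]

theorem atLeastOneColour_add_sum_varLe (w : V) :
    atLeastOneColour w + ∑ j : Fin k, varLe (w, j) 0 = falsum := by
  ext ⟨v, i⟩
  · by_cases hv : v = w <;> simp [atLeastOneColour, varLe, falsum, hv, Prod.ext_iff]
  · simp [atLeastOneColour, varLe, falsum]

theorem derivable_falsum_of_forall_colour [NeZero k] {S : Set (LinIneq (V × Fin k))} {w : V}
    (hw : atLeastOneColour w ∈ S) {B : ℕ} (H : ∀ j, CPDerivable (S ∪ eqOne (w, j)) falsum B) :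
    CPDerivable S falsum (10 * k * B) := by
  have hB : 1 ≤ B := by
    obtain ⟨L₀, hL₀, h⟩ := H 0
    exact h.one_le.trans hL₀
  have hcolour : ∀ j ∈ Finset.univ, CPDerivable S (varLe (w, j) 0) (5 * B + 3) := by
    intro j _
    obtain ⟨L₀, hL₀, h⟩ := H j
    obtain ⟨L', hL', h'⟩ := CP.derivable_varLe_zero_of_union_eqOne h
    exact ⟨L', by omega, h'⟩
  obtain ⟨L', hL', h⟩ := (CP.hyp _ hw).derivable_add_sum Finset.univ _ hcolour
  rw [atLeastOneColour_add_sum_varLe] at h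
  rw [Finset.card_univ, Fintype.card_fin] at hL'
  exact ⟨L', by nlinarith [NeZero.one_le (n := k)], h⟩

theorem derivable_falsum_of_forall_fixColours [NeZero k] {ℓ : ℕ} {S : Set (LinIneq (V × Fin k))}
    (u : Fin ℓ → V) (hS : ∀ t, atLeastOneColour (u t) ∈ S) {L : ℕ}
    (H : ∀ c, CPDerivable (S ∪ fixColours u c) falsum L) :
    CPDerivable S falsum ((10 * k) ^ ℓ * L) := by
  induction ℓ generalizing S with
  | zero => simpa [fixColours] using H Fin.elim0
  | succ ℓ ih =>
    rw [pow_succ', mul_assoc]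
    refine derivable_falsum_of_forall_colour (hS 0) fun j => ih (Fin.tail u)
      (fun t => Or.inl (hS t.succ)) fun c => ?_
    rw [Set.union_assoc, ← fixColours_cons]
    exact H _

end Colouring

theorem stmt_16 :
    ∃ C : ℕ, ∀ (V : Type) (_ : DecidableEq V) (G : SimpleGraph V)
      (k ℓ L : ℕ), 2 ≤ k → ∀ u : Fin ℓ → V,
      (∀ c : Fin ℓ → Fin k, ∃ L₀, L₀ ≤ L ∧
        CP (colAx G k ∪ {I | ∃ t : Fin ℓ,
              I = ⟨fun p => if p = (u t, c t) then 1 else 0, 1⟩ ∨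
              I = ⟨fun p => if p = (u t, c t) then -1 else 0, -1⟩})
          ⟨fun _ => 0, -1⟩ L₀) →
      ∃ L', L' ≤ k ^ (C * (ℓ + 1)) * L ∧
        CP (colAx G k) ⟨fun _ => 0, -1⟩ L' := by
  refine ⟨5, fun V _ G k ℓ L hk u H => ?_⟩
  have : NeZero k := ⟨by omega⟩
  have hfix : ∀ c : Fin ℓ → Fin k, fixColours u c = {I | ∃ t : Fin ℓ,
      I = ⟨fun p => if p = (u t, c t) then 1 else 0, 1⟩ ∨
      I = ⟨fun p => if p = (u t, c t) then -1 else 0, -1⟩} := by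
    intro c
    ext I
    simp [fixColours, eqOne, varLe]
  obtain ⟨L', hL', h⟩ := derivable_falsum_of_forall_fixColours (S := colAx G k) u
    (fun t => Or.inl ⟨u t, rfl⟩) fun c => by rw [hfix]; exact H c
  have hbase : 10 * k ≤ k ^ 5 :=
    calc 10 * k ≤ 2 ^ 4 * k := by omega
      _ ≤ k ^ 4 * k := by gcongr
      _ = k ^ 5 := by ring
  refine ⟨L', hL'.trans ?_, h⟩
  calc (10 * k) ^ ℓ * L ≤ (k ^ 5) ^ ℓ * L := by gcongr
    _ ≤ k ^ (5 * (ℓ + 1)) * L := by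
      rw [← pow_mul]
      gcongr <;> omega
end
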